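/- One-step worst-case CVaR bound with bounded input: let ε ∈ (0,1), A ∈ ℝ^{n_x×n_x} with spectral norm ‖A‖ < 1, D ∈ ℝ^{n_x×n_v}, E ∈ ℝ^{n_x×n_w}, Σ_w positive semidefinite, and d ≥ 0. Then for every x ∈ ℝ^{n_x} and every v ∈ ℝ^{n_v} with ‖v‖ ≤ d: sup_{P ∈ M(Σ_w)} CVaR_ε^P[ ‖A x + D v + E w‖² ] ≤ ‖A‖·‖x‖² + (1/(1 − ‖A‖))·( ‖D‖·d + √((1/ε)·Tr(Σ_w Eᵀ E)) )². -/

import Mathlib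

/-!
Write `a = ‖A‖`, `c = ‖D‖ d` and `s = ‖E w‖`. By the triangle inequality and convexity of `t ↦ t²`,
`(a X + q)² ≤ a X² + q² / (1 - a)`, so the loss is at most `a ‖x‖² + (c + s)² / (1 - a)` pointwise.
For the CVaR of `(c + s)²` take the threshold `β = c² + c r` with `r² = E[s²] / ε`: by AM-GM,
`2 c s ≤ c (r + s² / r)`, so `((c + s)² - β)₊ ≤ (1 + c / r) s²`, and `β + E[(1 + c / r) s²] / ε`
equals `(c + r)²`. Only second moments of the disturbance enter, via `E ‖E w‖² = Tr (Σ_w Eᵀ E)`.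
-/

open MeasureTheory Matrix Kronecker

/-- Spectral norm (largest singular value) of a real matrix, as the operator norm of the
induced map between Euclidean spaces. -/
noncomputable def specNorm {m n : Type*} [Fintype m] [Fintype n] [DecidableEq n]
    (A : Matrix m n ℝ) : ℝ :=
  ‖LinearMap.toContinuousLinearMap (Matrix.toEuclideanLin A)‖

/-- Conditional value-at-risk at level `ε` of the loss `L` under the measure `P`:
`CVaR_ε^P[L] = inf_β ( β + (1/ε) E_P[max (L ξ - β) 0] )`. -/
noncomputable def CVaR {ι : Type*} [Fintype ι] (ε : ℝ)
    (P : Measure (EuclideanSpace ℝ ι)) (L : EuclideanSpace ℝ ι → ℝ) : ℝ :=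
  ⨅ β : ℝ, (β + ε⁻¹ * ∫ ξ, max (L ξ - β) 0 ∂P)

/-- The set `M(S)` of Borel probability measures with zero mean and covariance `S`. -/
def MomentSet {ι : Type*} [Fintype ι] (S : Matrix ι ι ℝ) :
    Set (Measure (EuclideanSpace ℝ ι)) :=
  {P | IsProbabilityMeasure P ∧
       (∀ i, Integrable (fun ξ => ξ i) P) ∧
       (∀ i, ∫ ξ, ξ i ∂P = 0) ∧
       (∀ i j, Integrable (fun ξ => ξ i * ξ j) P) ∧
       (∀ i j, ∫ ξ, ξ i * ξ j ∂P = S i j)}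

/-- Worst-case CVaR over the moment set `M(S)`. -/
noncomputable def wcCVaR {ι : Type*} [Fintype ι] (ε : ℝ) (S : Matrix ι ι ℝ)
    (L : EuclideanSpace ℝ ι → ℝ) : ℝ :=
  ⨆ P : MomentSet S, CVaR ε (P : Measure (EuclideanSpace ℝ ι)) L

lemma add_sq_le_of_pos {c r : ℝ} (hc : 0 ≤ c) (hr : 0 < r) (s : ℝ) :
    (c + s) ^ 2 ≤ c ^ 2 + c * r + (1 + c / r) * s ^ 2 := by
  have key : c ^ 2 + c * r + (1 + c / r) * s ^ 2 - (c + s) ^ 2 = c * (s - r) ^ 2 / r := by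
    field_simp
    ring
  have : 0 ≤ c * (s - r) ^ 2 / r := by positivity
  linarith

lemma mul_add_sq_le_of_lt_one {a : ℝ} (ha0 : 0 ≤ a) (ha1 : a < 1) (X q : ℝ) :
    (a * X + q) ^ 2 ≤ a * X ^ 2 + (1 - a)⁻¹ * q ^ 2 := by
  have h1a : 0 < 1 - a := by linarith
  have key : a * X ^ 2 + (1 - a)⁻¹ * q ^ 2 - (a * X + q) ^ 2
      = a * ((1 - a) * X - q) ^ 2 / (1 - a) := by
    field_simp
    ring
  have : 0 ≤ a * ((1 - a) * X - q) ^ 2 / (1 - a) := by positivity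
  linarith

lemma norm_add_add_sq_le {F : Type*} [SeminormedAddCommGroup F] {y z u : F} {a X c : ℝ}
    (ha0 : 0 ≤ a) (ha1 : a < 1) (hy : ‖y‖ ≤ a * X) (hz : ‖z‖ ≤ c) :
    ‖y + z + u‖ ^ 2 ≤ a * X ^ 2 + (1 - a)⁻¹ * (c + ‖u‖) ^ 2 :=
  calc ‖y + z + u‖ ^ 2 ≤ (a * X + (c + ‖u‖)) ^ 2 :=
        pow_le_pow_left₀ (norm_nonneg _) (by linarith [norm_add₃_le (a := y) (b := z) (c := u)]) 2
    _ ≤ a * X ^ 2 + (1 - a)⁻¹ * (c + ‖u‖) ^ 2 := mul_add_sq_le_of_lt_one ha0 ha1 _ _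

section CVaR

variable {ι : Type*} [Fintype ι] {ε : ℝ} {P : Measure (EuclideanSpace ℝ ι)}
  {L : EuclideanSpace ℝ ι → ℝ}

/-- The hypothesis `0 ≤ B` covers the case of an objective unbounded below, whose real infimum
is the junk value `0`. -/
lemma CVaR_le_of_le {B : ℝ} (hB : 0 ≤ B) (β : ℝ)
    (hβ : β + ε⁻¹ * ∫ ξ, max (L ξ - β) 0 ∂P ≤ B) : CVaR ε P L ≤ B := by
  by_cases hbdd : BddBelow (Set.range fun β : ℝ => β + ε⁻¹ * ∫ ξ, max (L ξ - β) 0 ∂P)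
  · exact (ciInf_le hbdd β).trans hβ
  · rw [CVaR, Real.iInf_of_not_bddBelow hbdd]
    exact hB

lemma CVaR_le_of_le_add_mul_sq {b k c : ℝ} {s : EuclideanSpace ℝ ι → ℝ} (hε : 0 < ε)
    (hb : 0 ≤ b) (hk : 0 ≤ k) (hc : 0 ≤ c) (hs : Integrable (fun ξ => s ξ ^ 2) P)
    (hL : ∀ ξ, L ξ ≤ b + k * (c + s ξ) ^ 2) :
    CVaR ε P L ≤ b + k * (c + √(ε⁻¹ * ∫ ξ, s ξ ^ 2 ∂P)) ^ 2 := by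
  set T := ∫ ξ, s ξ ^ 2 ∂P
  have hT : 0 ≤ T := integral_nonneg fun ξ => sq_nonneg _
  have hr2 : √(ε⁻¹ * T) ^ 2 = ε⁻¹ * T := Real.sq_sqrt (by positivity)
  have hr0 := Real.sqrt_nonneg (ε⁻¹ * T)
  generalize √(ε⁻¹ * T) = r at hr2 hr0 ⊢
  refine CVaR_le_of_le (by positivity) (b + k * (c ^ 2 + c * r)) ?_
  rcases hr0.eq_or_lt with rfl | hr
  · have hT0 : T = 0 := by simpa [hε.ne'] using hr2.symm
    have hs0 : (fun ξ => s ξ ^ 2) =ᵐ[P] 0 :=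
      (integral_eq_zero_iff_of_nonneg (fun ξ => sq_nonneg _) hs).1 hT0
    have hexcess : ∫ ξ, max (L ξ - (b + k * (c ^ 2 + c * 0))) 0 ∂P = 0 := by
      refine integral_eq_zero_of_ae ?_
      filter_upwards [hs0] with ξ hξ
      have hsξ : s ξ = 0 := pow_eq_zero_iff two_ne_zero |>.1 hξ
      have := hL ξ
      rw [hsξ] at this
      exact max_eq_right (by linarith)
    rw [hexcess]
    simp
  · have hexcess : ∫ ξ, max (L ξ - (b + k * (c ^ 2 + c * r))) 0 ∂P
        ≤ ∫ ξ, k * (1 + c / r) * s ξ ^ 2 ∂P := by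
      refine integral_mono_of_nonneg (ae_of_all _ fun _ => le_max_right _ _) (hs.const_mul _)
        (ae_of_all _ fun ξ => max_le ?_ (by positivity))
      have := mul_le_mul_of_nonneg_left (add_sq_le_of_pos hc hr (s ξ)) hk
      linarith [hL ξ]
    rw [integral_const_mul] at hexcess
    calc b + k * (c ^ 2 + c * r) + ε⁻¹ * ∫ ξ, max (L ξ - (b + k * (c ^ 2 + c * r))) 0 ∂P
        ≤ b + k * (c ^ 2 + c * r) + ε⁻¹ * (k * (1 + c / r) * T) := by
          gcongr
      _ = b + k * (c + r) ^ 2 := by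
          rw [mul_left_comm, ← hr2]
          field_simp
          ring

end CVaR

lemma specNorm_nonneg {m n : Type*} [Fintype m] [Fintype n] [DecidableEq n]
    (A : Matrix m n ℝ) : 0 ≤ specNorm A :=
  norm_nonneg _

lemma norm_toEuclideanLin_le {m n : Type*} [Fintype m] [Fintype n] [DecidableEq n]
    (A : Matrix m n ℝ) (x : EuclideanSpace ℝ n) :
    ‖toEuclideanLin A x‖ ≤ specNorm A * ‖x‖ :=
  (LinearMap.toContinuousLinearMap (toEuclideanLin A)).le_opNorm x

lemma norm_toEuclideanLin_sq {m n : Type*} [Fintype m] [Fintype n] [DecidableEq n]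
    (E : Matrix m n ℝ) (w : EuclideanSpace ℝ n) :
    ‖toEuclideanLin E w‖ ^ 2 = ∑ j, ∑ k, (Eᵀ * E) k j * (w j * w k) := by
  simp only [EuclideanSpace.norm_sq_eq, Real.norm_eq_abs, sq_abs]
  simp only [toLpLin_apply, mulVec, dotProduct, mul_apply, transpose_apply, sq,
    Finset.sum_mul, Finset.mul_sum]
  rw [Finset.sum_comm]
  refine Finset.sum_congr rfl fun j _ => ?_
  rw [Finset.sum_comm]
  exact Finset.sum_congr rfl fun k _ => Finset.sum_congr rfl fun i _ => by ring

section SecondMoment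

variable {m n : Type*} [Fintype m] [Fintype n] [DecidableEq n] {P : Measure (EuclideanSpace ℝ n)}
  (E : Matrix m n ℝ)

lemma integrable_norm_toEuclideanLin_sq
    (hint : ∀ i j, Integrable (fun ξ : EuclideanSpace ℝ n => ξ i * ξ j) P) :
    Integrable (fun w => ‖toEuclideanLin E w‖ ^ 2) P := by
  simp_rw [norm_toEuclideanLin_sq]
  exact integrable_finsetSum _ fun j _ => integrable_finsetSum _ fun k _ =>
    (hint j k).const_mul _

lemma integral_norm_toEuclideanLin_sq {S : Matrix n n ℝ}
    (hint : ∀ i j, Integrable (fun ξ : EuclideanSpace ℝ n => ξ i * ξ j) P)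
    (hcov : ∀ i j, ∫ ξ, ξ i * ξ j ∂P = S i j) :
    ∫ w, ‖toEuclideanLin E w‖ ^ 2 ∂P = trace (S * Eᵀ * E) := by
  simp_rw [norm_toEuclideanLin_sq]
  rw [integral_finsetSum _ fun j _ => integrable_finsetSum _ fun k _ => (hint j k).const_mul _]
  simp_rw [integral_finsetSum _ fun k _ => (hint _ k).const_mul _, integral_const_mul, hcov]
  rw [Matrix.mul_assoc]
  simp only [trace, diag, mul_apply, mul_comm]

end SecondMoment

theorem stmt15_general {nx nv nw : ℕ} (ε : ℝ) (hε : ε ∈ Set.Ioo (0 : ℝ) 1)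
    (A : Matrix (Fin nx) (Fin nx) ℝ) (D : Matrix (Fin nx) (Fin nv) ℝ)
    (E : Matrix (Fin nx) (Fin nw) ℝ) (Sw : Matrix (Fin nw) (Fin nw) ℝ)
    (hA : specNorm A < 1)
    (d : ℝ) (hd : 0 ≤ d) :
    ∀ x : EuclideanSpace ℝ (Fin nx), ∀ v : EuclideanSpace ℝ (Fin nv), ‖v‖ ≤ d →
      wcCVaR ε Sw
        (fun w => ‖Matrix.toEuclideanLin A x + Matrix.toEuclideanLin D v +
          Matrix.toEuclideanLin E w‖ ^ 2) ≤
      specNorm A * ‖x‖ ^ 2 +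
        (1 - specNorm A)⁻¹ *
          (specNorm D * d + Real.sqrt (ε⁻¹ * Matrix.trace (Sw * Eᵀ * E))) ^ 2 := by
  intro x v hv
  have hA0 := specNorm_nonneg A
  have hc : 0 ≤ specNorm D * d := mul_nonneg (specNorm_nonneg D) hd
  have hk : 0 ≤ (1 - specNorm A)⁻¹ := inv_nonneg.2 (by linarith)
  refine Real.iSup_le (fun P => ?_) (by positivity)
  obtain ⟨-, -, -, hint, hcov⟩ := P.2
  rw [← integral_norm_toEuclideanLin_sq E hint hcov]
  refine CVaR_le_of_le_add_mul_sq hε.1 (by positivity) hk hc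
    (integrable_norm_toEuclideanLin_sq E hint) fun w => norm_add_add_sq_le hA0 hA
      (norm_toEuclideanLin_le A x) ?_
  calc ‖toEuclideanLin D v‖ ≤ specNorm D * ‖v‖ := norm_toEuclideanLin_le D v
    _ ≤ specNorm D * d := mul_le_mul_of_nonneg_left hv (specNorm_nonneg D)

/-- one-step worst-case CVaR bound with bounded input. -/
theorem stmt15 {nx nv nw : ℕ} (ε : ℝ) (hε : ε ∈ Set.Ioo (0 : ℝ) 1)
    (A : Matrix (Fin nx) (Fin nx) ℝ) (D : Matrix (Fin nx) (Fin nv) ℝ)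
    (E : Matrix (Fin nx) (Fin nw) ℝ) (Sw : Matrix (Fin nw) (Fin nw) ℝ)
    (hA : specNorm A < 1) (hSw : Sw.PosSemidef)
    (d : ℝ) (hd : 0 ≤ d) :
    ∀ x : EuclideanSpace ℝ (Fin nx), ∀ v : EuclideanSpace ℝ (Fin nv), ‖v‖ ≤ d →
      wcCVaR ε Sw
        (fun w => ‖Matrix.toEuclideanLin A x + Matrix.toEuclideanLin D v +
          Matrix.toEuclideanLin E w‖ ^ 2) ≤
      specNorm A * ‖x‖ ^ 2 +
        (1 - specNorm A)⁻¹ *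
          (specNorm D * d + Real.sqrt (ε⁻¹ * Matrix.trace (Sw * Eᵀ * E))) ^ 2 :=
  stmt15_general ε hε A D E Sw hA d hd
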